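/- Let f be an odd prime not dividing 46 and let (a_n, b_n) be the sequences with a_n + b_n √46 = (24335 + 3588 √46)^n. Let ψ(f) = f - (46/f) (Legendre symbol). Then f divides b_{ψ(f)/2}. -/

import Mathlib

/-!
Send `√d` to a square root `r` of `d` in an algebraically closed field `K` of characteristic `p`.
Frobenius fixes the integers and sends `r` to `(d/p) r`, so it fixes the image of `x` when
`(d/p) = 1` and conjugates it when `(d/p) = -1`; as `x` has norm `1`, in both cases the image of `x`
has order dividing `ψ`. Hence `y = x ^ (ψ / 2)` and its conjugate `y⁻¹` have the same image `±1`,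
so `2 · y.im · r` vanishes in `K`, and `2 r ≠ 0` forces `p ∣ y.im`.
-/

theorem even_sub_legendreSym (p : ℕ) [Fact p.Prime] (hp : p ≠ 2) {a : ℤ} (ha : ¬ (p : ℤ) ∣ a) :
    Even ((p : ℤ) - legendreSym p a) := by
  have hpodd : Odd (p : ℤ) := by exact_mod_cast (Fact.out : p.Prime).odd_of_ne_two hp
  have ha' : (a : ZMod p) ≠ 0 := by rwa [Ne, ZMod.intCast_zmod_eq_zero_iff_dvd]
  rcases legendreSym.eq_one_or_neg_one p ha' with hχ | hχ <;> rw [hχ]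
  · exact hpodd.sub_odd odd_one
  · exact hpodd.sub_odd odd_neg_one

theorem pow_char_eq_legendreSym_mul {K : Type*} [Field K] (p : ℕ) [Fact p.Prime] [CharP K p]
    (hp : p ≠ 2) {d : ℤ} {r : K} (hr : r * r = d) : r ^ p = legendreSym p d * r := by
  have hχ := congrArg (ZMod.castHom (dvd_refl p) K) (legendreSym.eq_pow p d)
  rw [map_intCast, map_pow, map_intCast, ← hr] at hχ
  rw [hχ, ← pow_two, ← pow_mul, ← pow_succ,
    Nat.two_mul_div_two_add_one_of_odd ((Fact.out : p.Prime).odd_of_ne_two hp)]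

namespace Zsqrtd

variable {d : ℤ} {K : Type*} [Field K] {r : K} (hr : r * r = d)

theorem lift_sub_lift_star (x : ℤ√d) :
    lift ⟨r, hr⟩ x - lift ⟨r, hr⟩ (star x) = 2 * x.im * r := by
  simp only [lift_apply_apply, re_star, im_star]
  push_cast
  ring

theorem lift_mul_lift_star {x : ℤ√d} (hx : x.norm = 1) :
    lift ⟨r, hr⟩ x * lift ⟨r, hr⟩ (star x) = 1 := by
  rw [← map_mul, ← norm_eq_mul_conj, hx, Int.cast_one, map_one]

theorem lift_star_eq_lift_of_sq_eq_one {x : ℤ√d} (hx : x.norm = 1)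
    (h : lift ⟨r, hr⟩ x ^ 2 = 1) : lift ⟨r, hr⟩ (star x) = lift ⟨r, hr⟩ x := by
  have hne : lift ⟨r, hr⟩ x ≠ 0 := left_ne_zero_of_mul_eq_one (lift_mul_lift_star hr hx)
  apply mul_left_cancel₀ hne
  rw [lift_mul_lift_star hr hx, ← sq, h]

variable (p : ℕ) [Fact p.Prime] [CharP K p]

theorem dvd_im_of_lift_sq_eq_one (hp : p ≠ 2) (hd : ¬ (p : ℤ) ∣ d) {x : ℤ√d}
    (hx : x.norm = 1) (h : lift ⟨r, hr⟩ x ^ 2 = 1) : (p : ℤ) ∣ x.im := by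
  have h2 : (2 : K) ≠ 0 := by
    exact_mod_cast (CharP.cast_eq_zero_iff K p 2).not.mpr
      (fun h2 => hp ((Nat.prime_dvd_prime_iff_eq Fact.out Nat.prime_two).mp h2))
  have hr0 : r ≠ 0 := by
    rintro rfl
    exact hd ((CharP.intCast_eq_zero_iff K p d).mp (by rw [← hr, mul_zero]))
  have hzero := lift_sub_lift_star hr x
  rw [lift_star_eq_lift_of_sq_eq_one hr hx h, sub_self, eq_comm] at hzero
  simpa [h2, hr0, CharP.intCast_eq_zero_iff K p] using hzero

theorem lift_pow_char (x : ℤ√d) : lift ⟨r, hr⟩ x ^ p = x.re + x.im * r ^ p := by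
  rw [← frobenius_def, lift_apply_apply, map_add, map_mul, map_intCast, map_intCast,
    frobenius_def]

theorem lift_pow_eq_one (hp : p ≠ 2) (hd : ¬ (p : ℤ) ∣ d) {x : ℤ√d} (hx : x.norm = 1)
    {ψ : ℕ} (hψ : (ψ : ℤ) = p - legendreSym p d) : lift ⟨r, hr⟩ x ^ ψ = 1 := by
  have hd' : (d : ZMod p) ≠ 0 := by rwa [Ne, ZMod.intCast_zmod_eq_zero_iff_dvd]
  have hfrob := lift_pow_char hr p x
  rw [pow_char_eq_legendreSym_mul p hp hr] at hfrob
  rcases legendreSym.eq_one_or_neg_one p hd' with hχ | hχ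
  · have hfix : lift ⟨r, hr⟩ x ^ p = lift ⟨r, hr⟩ x := by
      rw [hfrob, hχ, Int.cast_one, one_mul, lift_apply_apply]
    have hne : lift ⟨r, hr⟩ x ≠ 0 := left_ne_zero_of_mul_eq_one (lift_mul_lift_star hr hx)
    have hψp : ψ + 1 = p := by omega
    exact mul_right_cancel₀ hne (by rw [one_mul, ← pow_succ, hψp, hfix])
  · have hswap : lift ⟨r, hr⟩ x ^ p = lift ⟨r, hr⟩ (star x) := by
      rw [hfrob, hχ, lift_apply_apply, re_star, im_star]
      push_cast
      ring
    have hψp : ψ = p + 1 := by omega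
    rw [hψp, pow_succ, hswap, mul_comm, lift_mul_lift_star hr hx]

end Zsqrtd

theorem Zsqrtd.prime_dvd_im_pow_div_two {d : ℤ} (p : ℕ) [Fact p.Prime] (hp : p ≠ 2)
    (hd : ¬ (p : ℤ) ∣ d) {x : ℤ√d} (hx : x.norm = 1) {ψ : ℕ}
    (hψ : (ψ : ℤ) = p - legendreSym p d) : (p : ℤ) ∣ (x ^ (ψ / 2)).im := by
  obtain ⟨r, hr⟩ := IsAlgClosed.exists_eq_mul_self (d : AlgebraicClosure (ZMod p))
  have hψ2 : ψ / 2 * 2 = ψ := Nat.div_two_mul_two_of_even <| by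
    rw [← Int.even_coe_nat, hψ]
    exact even_sub_legendreSym p hp hd
  have hxm : (x ^ (ψ / 2)).norm = 1 := by
    change normMonoidHom _ = 1
    rw [map_pow]
    exact (congrArg (· ^ (ψ / 2)) hx).trans (one_pow _)
  apply dvd_im_of_lift_sq_eq_one hr.symm p hp hd hxm
  rw [map_pow, ← pow_mul, hψ2, lift_pow_eq_one hr.symm p hp hd hx hψ]

/-- Let `f` be an odd prime not dividing `46`, let `(aₙ, bₙ)` be defined by
`aₙ + bₙ√46 = (24335 + 3588√46)^n`, and `ψ = f - (46/f)` (Legendre symbol).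
Then `f ∣ b_{ψ/2}`. -/
theorem pell46_divides_half_psi (f : ℕ) [Fact f.Prime] (hodd : f ≠ 2)
    (h46 : ¬ (f : ℤ) ∣ 46) (ψ : ℕ) (hψ : (ψ : ℤ) = (f : ℤ) - legendreSym f 46) :
    (f : ℤ) ∣ (((⟨24335, 3588⟩ : ℤ√46)) ^ (ψ / 2)).im :=
  Zsqrtd.prime_dvd_im_pow_div_two f hodd h46 (by decide) hψ
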